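/- arXiv:2204.02951 — 2 statements merged into one kernel-verified Lean document; each statement's English description precedes it below -/
import Mathlib

section
/- If P is a row-stochastic matrix and D_ν is the diagonal matrix with entries ν_j = Σ_ℓ P_{ℓj} (assumed positive), then Q = P D_ν^{-1} P^⊤ is a doubly stochastic matrix. -/
open Matrix

/-- If `P` is row-stochastic and `ν j = ∑ ℓ, P ℓ j > 0`, then
`Q = P Dν⁻¹ Pᵀ` is doubly stochastic: nonnegative entries, row sums 1, column sums 1. -/
theorem forward_backward_doubly_stochastic {n : ℕ} (P : Matrix (Fin n) (Fin n) ℝ)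
    (hnonneg : ∀ i j, 0 ≤ P i j) (hrow : ∀ i, ∑ j, P i j = 1)
    (ν : Fin n → ℝ) (hν : ∀ j, ν j = ∑ ℓ, P ℓ j) (hνpos : ∀ j, 0 < ν j)
    (Q : Matrix (Fin n) (Fin n) ℝ)
    (hQ : Q = P * Matrix.diagonal (fun j => (ν j)⁻¹) * Pᵀ) :
    (∀ i j, 0 ≤ Q i j) ∧ (∀ i, ∑ j, Q i j = 1) ∧ (∀ j, ∑ i, Q i j = 1) := by
  have hQij : ∀ i j, Q i j = ∑ k, P i k * (ν k)⁻¹ * P j k := by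
    intro i j
    simp [hQ, Matrix.mul_apply, Matrix.diagonal, Matrix.transpose_apply,
      Finset.sum_mul]
  have hsum : ∀ i, ∑ j, Q i j = 1 := by
    intro i
    simp only [hQij]
    rw [Finset.sum_comm]
    have : ∀ k : Fin n, ∑ j, P i k * (ν k)⁻¹ * P j k = P i k := by
      intro k
      rw [← Finset.mul_sum, ← hν k, mul_assoc,
        inv_mul_cancel₀ (hνpos k).ne', mul_one]
    rw [Finset.sum_congr rfl fun k _ => this k, hrow]
  have hsym : ∀ i j, Q i j = Q j i := by
    intro i j
    simp only [hQij]
    exact Finset.sum_congr rfl fun k _ => by ring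
  refine ⟨fun i j => ?_, hsum, fun j => ?_⟩
  · rw [hQij]
    exact Finset.sum_nonneg fun k _ => mul_nonneg
      (mul_nonneg (hnonneg i k) (inv_nonneg.2 (hνpos k).le)) (hnonneg j k)
  · rw [Finset.sum_congr rfl fun i _ => hsym i j]
    exact hsum j
end

section
/- Under the same sampling setup, the EDMD estimator K̂^(m) = C_xx^+ C_xy converges almost surely to P as m → ∞, and the forward-backward estimator F̂^(m) = C_xx^+ C_xy C_yy^+ C_yx converges almost surely to Q = P D_ν^{-1} P^⊤, provided all column sums ν_j of P are positive. -/
open MeasureTheory ProbabilityTheory Filter Matrix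

/-- `B` is the Moore–Penrose pseudoinverse of `A`. -/
def IsMoorePenroseInverse {n : ℕ} (A B : Matrix (Fin n) (Fin n) ℝ) : Prop :=
  A * B * A = A ∧ B * A * B = B ∧ (A * B)ᵀ = A * B ∧ (B * A)ᵀ = B * A

open Topology

/-! Each entry of `C_xx`, `C_xy`, `C_yy` is the empirical mean of a function of the i.i.d. pairs
`(X k, Y k)` with values in a finite set, so by the strong law of large numbers the three
matrices converge almost surely to their expectations `n⁻¹ I`, `n⁻¹ P` and `n⁻¹ D_ν`. The
limits of `C_xx` and `C_yy` are invertible, hence so are `C_xx` and `C_yy` for large `m`, and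
then the identity `A A⁺ A = A` alone forces `A⁺ = A⁻¹`. Continuity of inversion and
multiplication gives `K̂ → (n⁻¹ I)⁻¹ (n⁻¹ P) = P` and
`F̂ → P (n⁻¹ D_ν)⁻¹ (n⁻¹ Pᵀ) = P D_ν⁻¹ Pᵀ = Q`. -/

lemma Matrix.inv_eq_of_mul_mul_self {ι 𝕜 : Type*} [Fintype ι] [DecidableEq ι] [CommRing 𝕜]
    {A B : Matrix ι ι 𝕜} (hA : IsUnit A.det) (hB : A * B * A = A) : A⁻¹ = B := by
  refine inv_eq_left_inv ?_
  calc B * A = A⁻¹ * (A * B * A) := by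
        rw [Matrix.mul_assoc, ← Matrix.mul_assoc A⁻¹, nonsing_inv_mul _ hA, Matrix.one_mul]
    _ = 1 := by rw [hB, nonsing_inv_mul _ hA]

lemma Matrix.tendsto_mul_of_mul_mul_self {ι 𝕜 β : Type*} [Fintype ι] [DecidableEq ι] [Field 𝕜]
    [TopologicalSpace 𝕜] [T1Space 𝕜] [IsTopologicalDivisionRing 𝕜] {l : Filter β}
    {A B C : β → Matrix ι ι 𝕜} {L K : Matrix ι ι 𝕜} (hL : IsUnit L)
    (hA : Tendsto A l (𝓝 L)) (hB : ∀ b, A b * B b * A b = A b)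
    (hC : Tendsto C l (𝓝 (L * K))) :
    Tendsto (fun b => B b * C b) l (𝓝 K) := by
  have hdet : L.det ≠ 0 := ((isUnit_iff_isUnit_det L).mp hL).ne_zero
  have hinv : Tendsto (fun b => (A b)⁻¹) l (𝓝 L⁻¹) := by
    refine (continuousAt_matrix_inv L ?_).tendsto.comp hA
    simp only [Ring.inverse_eq_inv']
    exact continuousAt_inv₀ hdet
  have hB_eq : (fun b => (A b)⁻¹) =ᶠ[l] B := by
    have := (continuous_id.matrix_det.tendsto L).comp hA
    filter_upwards [this.eventually_ne hdet] with b hb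
    exact inv_eq_of_mul_mul_self (isUnit_iff_ne_zero.mpr hb) (hB b)
  simpa only [← Matrix.mul_assoc, nonsing_inv_mul _ ((isUnit_iff_isUnit_det L).mp hL),
    Matrix.one_mul] using (hinv.congr' hB_eq).mul hC

section
variable {Ω α : Type*} [MeasurableSpace Ω] {μ : Measure Ω} [MeasurableSpace α]
  [MeasurableSingletonClass α]

lemma ProbabilityTheory.identDistrib_of_measure_preimage_singleton [Countable α]
    {ν : Measure Ω} {V W : Ω → α} (hV : Measurable V) (hW : Measurable W)
    (h : ∀ a, μ (V ⁻¹' {a}) = ν (W ⁻¹' {a})) : IdentDistrib V W μ ν where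
  aemeasurable_fst := hV.aemeasurable
  aemeasurable_snd := hW.aemeasurable
  map_eq := Measure.ext_of_singleton fun a => by
    rw [Measure.map_apply hV (measurableSet_singleton a),
      Measure.map_apply hW (measurableSet_singleton a), h]

lemma MeasureTheory.integral_comp_eq_sum [Fintype α] [IsFiniteMeasure μ] {W : Ω → α}
    (hW : Measurable W) (g : α → ℝ) :
    ∫ ω, g (W ω) ∂μ = ∑ a, μ.real (W ⁻¹' {a}) * g a := by
  rw [← integral_map hW.aemeasurable (measurable_of_finite g).aestronglyMeasurable,
    integral_fintype Integrable.of_finite]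
  simp only [map_measureReal_apply hW (measurableSet_singleton _), smul_eq_mul]

lemma ProbabilityTheory.ae_tendsto_average_comp [Fintype α] [IsFiniteMeasure μ]
    {W : ℕ → Ω → α} (hW : ∀ k, Measurable (W k)) (hindep : iIndepFun W μ)
    (hident : ∀ k, IdentDistrib (W k) (W 0) μ μ) (g : α → ℝ) :
    ∀ᵐ ω ∂μ, Tendsto (fun m : ℕ => (m : ℝ)⁻¹ * ∑ k ∈ Finset.range m, g (W k ω)) atTop
      (𝓝 (∑ a, μ.real (W 0 ⁻¹' {a}) * g a)) := by
  have hg : Measurable g := measurable_of_finite g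
  have hint : Integrable (fun ω => g (W 0 ω)) μ :=
    Integrable.comp_measurable Integrable.of_finite (hW 0)
  have := strong_law_ae (fun k ω => g (W k ω)) hint
    (fun i j hij => (hindep.indepFun hij).comp hg hg) (fun k => (hident k).comp hg)
  simpa only [integral_comp_eq_sum (hW 0), smul_eq_mul] using this

lemma MeasureTheory.ae_tendsto_matrix_of_entries {ι : Type*} [Countable ι]
    {C : ℕ → Ω → Matrix ι ι ℝ} {L : Matrix ι ι ℝ}
    (h : ∀ i j, ∀ᵐ ω ∂μ, Tendsto (fun m => C m ω i j) atTop (𝓝 (L i j))) :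
    ∀ᵐ ω ∂μ, Tendsto (fun m => C m ω) atTop (𝓝 L) := by
  have := ae_all_iff.mpr fun i => ae_all_iff.mpr (h i)
  filter_upwards [this] with ω hω
  exact tendsto_pi_nhds.2 fun i => tendsto_pi_nhds.2 (hω i)

lemma ProbabilityTheory.ae_tendsto_empiricalCov [Fintype α] [IsFiniteMeasure μ] {ι : Type*}
    [Countable ι] {W : ℕ → Ω → α} (hW : ∀ k, Measurable (W k)) (hindep : iIndepFun W μ)
    (hident : ∀ k, IdentDistrib (W k) (W 0) μ μ) {π : α → ℝ}
    (hπ : ∀ a, μ.real (W 0 ⁻¹' {a}) = π a) (φ ψ : α → ι → ℝ)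
    {C : ℕ → Ω → Matrix ι ι ℝ} {L : Matrix ι ι ℝ}
    (hC : ∀ m ω i j, C m ω i j = (m : ℝ)⁻¹ * ∑ k ∈ Finset.range m, φ (W k ω) i * ψ (W k ω) j)
    (hL : ∀ i j, ∑ a, π a * (φ a i * ψ a j) = L i j) :
    ∀ᵐ ω ∂μ, Tendsto (fun m => C m ω) atTop (𝓝 L) := by
  refine ae_tendsto_matrix_of_entries fun i j => ?_
  filter_upwards [ae_tendsto_average_comp hW hindep hident fun a => φ a i * ψ a j] with ω hω
  simpa only [hC, hπ, hL] using hω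

end

section TransitionMatrix

variable {n : ℕ} (P : Matrix (Fin n) (Fin n) ℝ)

lemma sum_div_mul_ite_fst_fst (hrow : ∀ i, ∑ j, P i j = 1) (i j : Fin n) :
    ∑ a : Fin n × Fin n, P a.1 a.2 / n * ((if a.1 = i then 1 else 0) * (if a.1 = j then 1 else 0))
      = ((n : ℝ)⁻¹ • (1 : Matrix (Fin n) (Fin n) ℝ)) i j := by
  simp [Fintype.sum_prod_type, ← Finset.sum_div, hrow, one_apply, eq_comm]

lemma sum_div_mul_ite_fst_snd (i j : Fin n) :
    ∑ a : Fin n × Fin n, P a.1 a.2 / n * ((if a.1 = i then 1 else 0) * (if a.2 = j then 1 else 0))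
      = ((n : ℝ)⁻¹ • P) i j := by
  simp [Fintype.sum_prod_type, div_eq_inv_mul, mul_comm]

lemma sum_div_mul_ite_snd_snd (ν : Fin n → ℝ) (hν : ∀ j, ν j = ∑ ℓ, P ℓ j) (i j : Fin n) :
    ∑ a : Fin n × Fin n, P a.1 a.2 / n * ((if a.2 = i then 1 else 0) * (if a.2 = j then 1 else 0))
      = ((n : ℝ)⁻¹ • diagonal ν) i j := by
  rcases eq_or_ne i j with rfl | hij
  · simp [Fintype.sum_prod_type, hν, div_eq_inv_mul, Finset.mul_sum]
  · simp [Fintype.sum_prod_type, hij, hij.symm]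

lemma tendsto_edmd_of_tendsto_cov (hn : 0 < n) {ν : Fin n → ℝ} (hνpos : ∀ j, 0 < ν j)
    {β : Type*} {l : Filter β} {Cxx Cxy Cyx Cyy Kxx Kyy : β → Matrix (Fin n) (Fin n) ℝ}
    (hxx : Tendsto Cxx l (𝓝 ((n : ℝ)⁻¹ • 1))) (hxy : Tendsto Cxy l (𝓝 ((n : ℝ)⁻¹ • P)))
    (hyy : Tendsto Cyy l (𝓝 ((n : ℝ)⁻¹ • diagonal ν))) (hCyx : ∀ b, Cyx b = (Cxy b)ᵀ)
    (hKxx : ∀ b, Cxx b * Kxx b * Cxx b = Cxx b) (hKyy : ∀ b, Cyy b * Kyy b * Cyy b = Cyy b) :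
    Tendsto (fun b => Kxx b * Cxy b) l (𝓝 P) ∧
      Tendsto (fun b => Kxx b * Cxy b * (Kyy b * Cyx b)) l
        (𝓝 (P * diagonal (fun j => (ν j)⁻¹) * Pᵀ)) := by
  have hn0 : (n : ℝ)⁻¹ ≠ 0 := inv_ne_zero (Nat.cast_ne_zero.mpr hn.ne')
  have hLxx : IsUnit ((n : ℝ)⁻¹ • (1 : Matrix (Fin n) (Fin n) ℝ)) :=
    (isUnit_smul_iff (Units.mk0 _ hn0) _).mpr isUnit_one
  have hLyy : IsUnit ((n : ℝ)⁻¹ • diagonal ν) := (isUnit_smul_iff (Units.mk0 _ hn0) _).mpr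
    (isUnit_diagonal.mpr (Pi.isUnit_iff.mpr fun j => (hνpos j).ne'.isUnit))
  have hνinv : diagonal ν * diagonal (fun j => (ν j)⁻¹) = 1 := by
    rw [diagonal_mul_diagonal, ← diagonal_one]
    exact congrArg diagonal (funext fun j => mul_inv_cancel₀ (hνpos j).ne')
  have hyx : Tendsto Cyx l (𝓝 ((n : ℝ)⁻¹ • Pᵀ)) := by
    rw [funext hCyx, ← transpose_smul]
    exact (continuous_id.matrix_transpose.tendsto _).comp hxy
  have hK := tendsto_mul_of_mul_mul_self (K := P) hLxx hxx hKxx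
    (by rwa [smul_mul_assoc, Matrix.one_mul])
  have hF := tendsto_mul_of_mul_mul_self (K := diagonal (fun j => (ν j)⁻¹) * Pᵀ) hLyy hyy hKyy
    (by rwa [smul_mul_assoc, ← Matrix.mul_assoc, hνinv, Matrix.one_mul])
  exact ⟨hK, by simpa only [Matrix.mul_assoc] using hK.mul hF⟩

end TransitionMatrix

/-- With i.i.d. samples (`X` uniform, `Y | X = i` following row `i` of `P`) and indicator
features, the EDMD estimator `K̂ = C_xx⁺ C_xy` converges almost surely to `P`, and the
forward-backward estimator `F̂ = C_xx⁺ C_xy C_yy⁺ C_yx` converges almost surely to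
`Q = P Dν⁻¹ Pᵀ`, provided the column sums `ν` of `P` are positive. -/
theorem edmd_estimators_convergence {n : ℕ} (hn : 0 < n)
    (P : Matrix (Fin n) (Fin n) ℝ)
    (hnonneg : ∀ i j, 0 ≤ P i j) (hrow : ∀ i, ∑ j, P i j = 1)
    (ν : Fin n → ℝ) (hν : ∀ j, ν j = ∑ ℓ, P ℓ j) (hνpos : ∀ j, 0 < ν j)
    (Q : Matrix (Fin n) (Fin n) ℝ)
    (hQ : Q = P * Matrix.diagonal (fun j => (ν j)⁻¹) * Pᵀ)
    {Ω : Type*} [MeasurableSpace Ω] (μ : Measure Ω) [IsProbabilityMeasure μ]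
    (X Y : ℕ → Ω → Fin n)
    (hmeas : ∀ k, Measurable fun ω => (X k ω, Y k ω))
    (hindep : iIndepFun (fun k ω => (X k ω, Y k ω)) μ)
    (hjoint : ∀ k (i j : Fin n),
      μ {ω | X k ω = i ∧ Y k ω = j} = ENNReal.ofReal (P i j / n))
    (Cxx Cxy Cyx Cyy : ℕ → Ω → Matrix (Fin n) (Fin n) ℝ)
    (hCxx : ∀ m ω i j, Cxx m ω i j = (m : ℝ)⁻¹ * ∑ k ∈ Finset.range m,
      (if X k ω = i then (1 : ℝ) else 0) * (if X k ω = j then (1 : ℝ) else 0))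
    (hCxy : ∀ m ω i j, Cxy m ω i j = (m : ℝ)⁻¹ * ∑ k ∈ Finset.range m,
      (if X k ω = i then (1 : ℝ) else 0) * (if Y k ω = j then (1 : ℝ) else 0))
    (hCyx : ∀ m ω, Cyx m ω = (Cxy m ω)ᵀ)
    (hCyy : ∀ m ω i j, Cyy m ω i j = (m : ℝ)⁻¹ * ∑ k ∈ Finset.range m,
      (if Y k ω = i then (1 : ℝ) else 0) * (if Y k ω = j then (1 : ℝ) else 0))
    (Kxx Kyy : ℕ → Ω → Matrix (Fin n) (Fin n) ℝ)
    (hKxx : ∀ m ω, IsMoorePenroseInverse (Cxx m ω) (Kxx m ω))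
    (hKyy : ∀ m ω, IsMoorePenroseInverse (Cyy m ω) (Kyy m ω)) :
    ∀ᵐ ω ∂μ,
      Tendsto (fun m : ℕ => Kxx m ω * Cxy m ω) atTop (nhds P) ∧
      Tendsto (fun m : ℕ => Kxx m ω * Cxy m ω * (Kyy m ω * Cyx m ω)) atTop (nhds Q) := by
  set W : ℕ → Ω → Fin n × Fin n := fun k ω => (X k ω, Y k ω)
  have hpreimage : ∀ k a, W k ⁻¹' {a} = {ω | X k ω = a.1 ∧ Y k ω = a.2} :=
    fun k a => Set.ext fun ω => Prod.ext_iff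
  have hident : ∀ k, IdentDistrib (W k) (W 0) μ μ := fun k =>
    identDistrib_of_measure_preimage_singleton (hmeas k) (hmeas 0) fun a => by
      rw [hpreimage, hpreimage, hjoint, hjoint]
  have hlaw : ∀ a, μ.real (W 0 ⁻¹' {a}) = P a.1 a.2 / n := fun a => by
    rw [measureReal_def, hpreimage, hjoint,
      ENNReal.toReal_ofReal (div_nonneg (hnonneg a.1 a.2) n.cast_nonneg)]
  have hxx := ae_tendsto_empiricalCov hmeas hindep hident hlaw
    (fun a i => if a.1 = i then 1 else 0) (fun a j => if a.1 = j then 1 else 0) hCxx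
    (sum_div_mul_ite_fst_fst P hrow)
  have hxy := ae_tendsto_empiricalCov hmeas hindep hident hlaw
    (fun a i => if a.1 = i then 1 else 0) (fun a j => if a.2 = j then 1 else 0) hCxy
    (sum_div_mul_ite_fst_snd P)
  have hyy := ae_tendsto_empiricalCov hmeas hindep hident hlaw
    (fun a i => if a.2 = i then 1 else 0) (fun a j => if a.2 = j then 1 else 0) hCyy
    (sum_div_mul_ite_snd_snd P ν hν)
  filter_upwards [hxx, hxy, hyy] with ω hxx hxy hyy
  exact hQ ▸ tendsto_edmd_of_tendsto_cov P hn hνpos hxx hxy hyy (hCyx · ω)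
    (fun m => (hKxx m ω).1) (fun m => (hKyy m ω).1)
end
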